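/- arXiv:2504.01359 — 2 statements merged into one kernel-verified Lean document; each statement's English description precedes it below -/
import Mathlib

section
/- More generally, for the Cauchy kernel E on M \ {0} and any fixed element a ∈ A, the function x ↦ E(x)·a is left monogenic: ∂̄_B(E(x)a) = 0 for all x ≠ 0. -/
/-!
Away from the origin, `E(x) a = σ⁻¹ ρ(x) (x^c a)` with `ρ(x) = |x|^{-(m+1)}` and `x ↦ x^c a`
real-linear. By the product rule, `∂̄_B (E a) = σ⁻¹ (ρ ∑ₛ vₛ (vₛ^c a) + ∑ₛ ∂ₛρ · vₛ (x^c a))`.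
Left alternativity together with `vₛ² = -1` gives `vₛ (vₛ^c a) = a`, and, the cross terms of
`x x^c` cancelling by anticommutativity, `x (x^c a) = |x|² a`. Since `∂ₛρ = -(m+1) ρ xₛ / |x|²`,
the two terms are `(m+1) ρ a` and `-(m+1) ρ a`.
-/

open Finset ContinuousLinearMap

theorem sum_offDiag_eq_zero_of_antisymm {ι M : Type*} [DecidableEq ι] [AddCommGroup M]
    (S : Finset ι) (f : ι → ι → M) (hf : ∀ s ∈ S, ∀ t ∈ S, s ≠ t → f s t = -f t s) :
    ∑ x ∈ S.offDiag, f x.1 x.2 = 0 := by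
  refine sum_involution (fun x _ => x.swap) (fun x hx => ?_) (fun x hx _ => ?_)
    (fun x hx => mem_offDiag.2 ?_) (fun x _ => x.swap_swap)
  · obtain ⟨hs, ht, hst⟩ := mem_offDiag.1 hx
    rw [Prod.fst_swap, Prod.snd_swap, hf _ hs _ ht hst, neg_add_cancel]
  · obtain ⟨-, -, hst⟩ := mem_offDiag.1 hx
    exact fun h => hst (congrArg Prod.snd h)
  · obtain ⟨hs, ht, hst⟩ := mem_offDiag.1 hx
    exact ⟨ht, hs, hst.symm⟩

section RadialFactor

variable {ι : Type*} [Fintype ι]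

theorem hasFDerivAt_sum_sq (p : ι → ℝ) :
    HasFDerivAt (fun q : ι → ℝ => ∑ i, q i ^ 2)
      ((2 : ℝ) • ∑ i, p i • (proj i : (ι → ℝ) →L[ℝ] ℝ)) p := by
  refine (HasFDerivAt.fun_sum (u := univ) fun i _ => (hasFDerivAt_apply i p).pow 2).congr_fderiv ?_
  ext q
  simp [Finset.mul_sum, mul_assoc]

theorem sum_sq_pos_of_ne_zero {p : ι → ℝ} (hp : p ≠ 0) : 0 < ∑ i, p i ^ 2 := by
  obtain ⟨i, hi⟩ := Function.ne_iff.1 hp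
  exact sum_pos' (fun j _ => sq_nonneg (p j)) ⟨i, mem_univ i, pow_two_pos_of_ne_zero hi⟩

theorem hasFDerivAt_inv_sqrt_sum_sq_pow (k : ℕ) {p : ι → ℝ} (hp : p ≠ 0) :
    HasFDerivAt (fun q : ι → ℝ => (√(∑ i, q i ^ 2) ^ k)⁻¹)
      ((-k * (√(∑ i, p i ^ 2) ^ k)⁻¹ / ∑ i, p i ^ 2) •
        ∑ i, p i • (proj i : (ι → ℝ) →L[ℝ] ℝ)) p := by
  have hn := sum_sq_pos_of_ne_zero hp
  set r := √(∑ i, p i ^ 2)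
  have hr : 0 < r := Real.sqrt_pos.2 hn
  have hr2 : r ^ 2 = ∑ i, p i ^ 2 := Real.sq_sqrt hn.le
  refine ((hasDerivAt_inv (pow_pos hr k).ne').comp_hasFDerivAt p
    (((hasFDerivAt_sum_sq p).sqrt hn.ne').pow k)).congr_fderiv ?_
  rw [smul_smul, smul_smul, smul_smul, ← hr2, Real.sqrt_sq hr.le]
  congr 1
  rcases k with _ | k
  · simp
  · simp only [nsmul_eq_mul, Nat.cast_add, Nat.cast_one, add_tsub_cancel_right]
    field_simp
    ring

end RadialFactor

section Dirac

variable {ι A : Type*} [Fintype ι] [DecidableEq ι] [NormedAddCommGroup A] [NormedSpace ℝ A]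
  (μ : A →L[ℝ] A →L[ℝ] A) (v : ι → A)

noncomputable def dbar (f : (ι → ℝ) → A) (p : ι → ℝ) : A :=
  ∑ s, μ (v s) (fderiv ℝ f p (Pi.single s 1))

theorem dbar_const_smul (c : ℝ) (f : (ι → ℝ) → A) (p : ι → ℝ) :
    dbar μ v (fun q => c • f q) p = c • dbar μ v f p := by
  change dbar μ v (c • f) p = _
  simp [dbar, fderiv_const_smul_field, smul_sum]

theorem dbar_smul_of_hasFDerivAt {ρ : (ι → ℝ) → ℝ} {ρ' : (ι → ℝ) →L[ℝ] ℝ} {p : ι → ℝ}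
    (hρ : HasFDerivAt ρ ρ' p) (L : (ι → ℝ) →L[ℝ] A) :
    dbar μ v (fun q => ρ q • L q) p =
      ρ p • ∑ s, μ (v s) (L (Pi.single s 1)) + ∑ s, ρ' (Pi.single s 1) • μ (v s) (L p) := by
  simp [dbar, (hρ.fun_smul L.hasFDerivAt).fderiv, sum_add_distrib, smul_sum]

end Dirac

section Paravector

variable {A : Type*} [NormedAddCommGroup A] [NormedSpace ℝ A] (μ : A →L[ℝ] A →L[ℝ] A)

theorem apply_sum_smul_self_of_anticomm {ι : Type*} [DecidableEq ι] (S : Finset ι) (w : ι → A)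
    (c : ι → ℝ) (hw : ∀ s ∈ S, ∀ t ∈ S, s ≠ t → μ (w s) (w t) = -μ (w t) (w s)) :
    μ (∑ s ∈ S, c s • w s) (∑ s ∈ S, c s • w s) = ∑ s ∈ S, c s ^ 2 • μ (w s) (w s) := by
  have hexpand : μ (∑ s ∈ S, c s • w s) (∑ s ∈ S, c s • w s)
      = ∑ x ∈ S ×ˢ S, (c x.1 * c x.2) • μ (w x.1) (w x.2) := by
    simp [sum_product_right, map_sum, smul_sum, smul_smul, mul_comm]
  rw [hexpand, ← diag_union_offDiag, sum_union (disjoint_diag_offDiag S), sum_diag,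
    sum_offDiag_eq_zero_of_antisymm S (fun s t => (c s * c t) • μ (w s) (w t)), add_zero]
  · simp [sq]
  · intro s hs t ht hst
    rw [hw s hs t ht hst, smul_neg, mul_comm]

variable {m : ℕ} (e : A) (v : Fin (m + 1) → A)

noncomputable def paravectorConj : (Fin (m + 1) → ℝ) →L[ℝ] A :=
  (proj 0).smulRight e - ∑ s ∈ univ \ {0}, (proj s).smulRight (v s)

theorem paravectorConj_apply (q : Fin (m + 1) → ℝ) :
    paravectorConj e v q = q 0 • e - ∑ s ∈ univ \ {0}, q s • v s := by
  simp [paravectorConj]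

theorem apply_paravectorConj_single (he : ∀ a, μ e a = a)
    (hLA : ∀ a b, μ (μ a a) b = μ a (μ a b)) (hv0 : v 0 = e)
    (hvsq : ∀ s, s ≠ 0 → μ (v s) (v s) = -e) (s : Fin (m + 1)) (a : A) :
    μ (v s) (μ (paravectorConj e v (Pi.single s 1)) a) = a := by
  rw [paravectorConj_apply]
  rcases eq_or_ne s 0 with rfl | hs
  · simp [hv0, he]
  · have hsum : ∑ t ∈ univ \ {0}, (Pi.single s 1 : Fin (m + 1) → ℝ) t • v t = v s := by
      simp [Pi.single_apply, hs]
    rw [hsum, Pi.single_eq_of_ne' hs, zero_smul, zero_sub, map_neg, neg_apply, map_neg, ← hLA,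
      hvsq s hs, map_neg, neg_apply, he, neg_neg]

theorem apply_paravector_apply_paravectorConj (he : ∀ a, μ e a = a)
    (hLA : ∀ a b, μ (μ a a) b = μ a (μ a b)) (hv0 : v 0 = e)
    (hvsq : ∀ s, s ≠ 0 → μ (v s) (v s) = -e)
    (hvanti : ∀ s t, s ≠ 0 → t ≠ 0 → s ≠ t → μ (v s) (v t) = -μ (v t) (v s))
    (q : Fin (m + 1) → ℝ) (a : A) :
    μ (∑ s, q s • v s) (μ (paravectorConj e v q) a) = (∑ s, q s ^ 2) • a := by
  rw [paravectorConj_apply, sum_eq_add_sum_sdiff_singleton_of_mem (mem_univ 0) (fun s => q s • v s),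
    sum_eq_add_sum_sdiff_singleton_of_mem (mem_univ 0) (fun s => q s ^ 2), hv0]
  set Y := ∑ s ∈ univ \ {0}, q s • v s
  have hS : ∀ s : Fin (m + 1), s ∈ univ \ {0} ↔ s ≠ 0 := by simp
  have hYY : μ Y Y = -(∑ s ∈ univ \ {0}, q s ^ 2) • e := by
    rw [apply_sum_smul_self_of_anticomm μ _ v q
      fun s hs t ht hst => hvanti s t ((hS s).1 hs) ((hS t).1 ht) hst, neg_smul, sum_smul,
      ← sum_neg_distrib]
    exact sum_congr rfl fun s hs => by rw [hvsq s ((hS s).1 hs), smul_neg]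
  have hYYa : μ Y (μ Y a) = -(∑ s ∈ univ \ {0}, q s ^ 2) • a := by
    rw [← hLA, hYY, map_smul, smul_apply, he]
  simp only [map_add, map_sub, map_smul, add_apply, sub_apply, smul_apply, he, hYYa]
  module

theorem dbar_inv_sqrt_sum_sq_pow_smul_paravectorConj (he : ∀ a, μ e a = a)
    (hLA : ∀ a b, μ (μ a a) b = μ a (μ a b)) (hv0 : v 0 = e)
    (hvsq : ∀ s, s ≠ 0 → μ (v s) (v s) = -e)
    (hvanti : ∀ s t, s ≠ 0 → t ≠ 0 → s ≠ t → μ (v s) (v t) = -μ (v t) (v s))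
    (a : A) {p : Fin (m + 1) → ℝ} (hp : p ≠ 0) :
    dbar μ v (fun q => (√(∑ i, q i ^ 2) ^ (m + 1))⁻¹ • μ (paravectorConj e v q) a) p = 0 := by
  have hn : ∑ i, p i ^ 2 ≠ 0 := (sum_sq_pos_of_ne_zero hp).ne'
  have hdbar := dbar_smul_of_hasFDerivAt μ v (hasFDerivAt_inv_sqrt_sum_sq_pow (m + 1) hp)
    ((μ.flip a).comp (paravectorConj e v))
  simp only [comp_apply, flip_apply] at hdbar
  have hsum : ∀ (c : ℝ) (x : A),
      ∑ s, (c • ∑ i, p i • (proj i : (Fin (m + 1) → ℝ) →L[ℝ] ℝ)) (Pi.single s 1) •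
        μ (v s) x = c • μ (∑ s, p s • v s) x := by
    intro c x
    simp [Pi.single_apply, mul_smul, smul_sum, map_sum]
  rw [hdbar, hsum, apply_paravector_apply_paravectorConj μ e v he hLA hv0 hvsq hvanti,
    sum_congr rfl fun s _ => apply_paravectorConj_single μ e v he hLA hv0 hvsq s a, sum_const,
    card_univ, Fintype.card_fin, smul_smul, ← Nat.cast_smul_eq_nsmul ℝ, smul_smul, ← add_smul]
  convert zero_smul ℝ a
  rw [div_mul_cancel₀ _ hn]
  ring

end Paravector

theorem cauchy_kernel_mul_right_monogenic_general {A : Type*} [NormedAddCommGroup A]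
    [NormedSpace ℝ A]
    (μ : A →L[ℝ] A →L[ℝ] A) (e : A)
    (he : ∀ a : A, μ e a = a ∧ μ a e = a)
    (hLA : ∀ a b : A, μ (μ a a) b = μ a (μ a b))
    (m : ℕ) (v : Fin (m + 1) → A)
    (hv0 : v 0 = e)
    (hvsq : ∀ s, s ≠ 0 → μ (v s) (v s) = -e)
    (hvanti : ∀ s t, s ≠ 0 → t ≠ 0 → s ≠ t → μ (v s) (v t) = -μ (v t) (v s))
    (σ : ℝ)
    (E : ((Fin (m + 1)) → ℝ) → A)
    (hE : E = fun q => (σ * Real.sqrt (∑ s, q s ^ 2) ^ (m + 1))⁻¹ •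
      (q 0 • e - ∑ s ∈ Finset.univ \ {0}, q s • v s))
    (a : A) (p : (Fin (m + 1)) → ℝ) (hp : p ≠ 0) :
    ∑ s, μ (v s) (fderiv ℝ (fun q => μ (E q) a) p (Pi.single s 1)) = 0 := by
  have hEa : (fun q => μ (E q) a) =
      fun q => σ⁻¹ • ((√(∑ i, q i ^ 2) ^ (m + 1))⁻¹ • μ (paravectorConj e v q) a) := by
    funext q
    simp only [hE, paravectorConj_apply, mul_inv, mul_smul, map_smul, smul_apply]
  change dbar μ v (fun q => μ (E q) a) p = 0
  rw [hEa, dbar_const_smul, dbar_inv_sqrt_sum_sq_pow_smul_paravectorConj μ e v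
    (fun b => (he b).1) hLA hv0 hvsq hvanti a hp, smul_zero]

/-- For the Cauchy kernel `E` on `M \ {0}` (hypercomplex subspace `M` of a real alternative
`∗`-algebra `A` with multiplication `μ`, unity `e`, basis `v 0 = e, …, v m`) and any fixed
`a ∈ A`, the function `x ↦ E(x) a` is left monogenic: `∂̄_B (E a) = 0` away from `0`. -/
theorem cauchy_kernel_mul_right_monogenic {A : Type*} [NormedAddCommGroup A]
    [NormedSpace ℝ A] [FiniteDimensional ℝ A]
    (μ : A →L[ℝ] A →L[ℝ] A) (e : A)
    (he : ∀ a : A, μ e a = a ∧ μ a e = a)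
    (hLA : ∀ a b : A, μ (μ a a) b = μ a (μ a b))
    (hRA : ∀ a b : A, μ (μ a b) b = μ a (μ b b))
    (m : ℕ) (hm : 1 ≤ m) (v : Fin (m + 1) → A)
    (hv0 : v 0 = e)
    (hvsq : ∀ s, s ≠ 0 → μ (v s) (v s) = -e)
    (hvanti : ∀ s t, s ≠ 0 → t ≠ 0 → s ≠ t → μ (v s) (v t) = -μ (v t) (v s))
    (σ : ℝ) (hσ : σ = 2 * Real.Gamma (1 / 2) ^ (m + 1) / Real.Gamma ((m + 1) / 2))
    (E : ((Fin (m + 1)) → ℝ) → A)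
    (hE : E = fun q => (σ * Real.sqrt (∑ s, q s ^ 2) ^ (m + 1))⁻¹ •
      (q 0 • e - ∑ s ∈ Finset.univ \ {0}, q s • v s))
    (a : A) (p : (Fin (m + 1)) → ℝ) (hp : p ≠ 0) :
    ∑ s, μ (v s) (fderiv ℝ (fun q => μ (E q) a) p (Pi.single s 1)) = 0 :=
  cauchy_kernel_mul_right_monogenic_general μ e he hLA m v hv0 hvsq hvanti σ E hE a p hp
end

section
/- Let P : M → A be a homogeneous polynomial of degree k that is left monogenic (∂̄_B P = 0). Then P admits the Fueter representation P(x) = ∑_{|k|=k} P_k(x) a_k with coefficients a_k = ∂_k P(0) ∈ A, where ∂_k = ∂^{k}/∂x₁^{k₁}⋯∂x_m^{k_m} and P_k are the Fueter polynomials. -/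
/-!
Euler's identity `∑ xₛ ∂ₛP = kP` and monogenicity `∂₀P = -∑_{s ≥ 1} vₛ ∂ₛP` give
`kP = ∑_{s ≥ 1} zₛ ∂ₛP`. The partial derivatives `∂ₛP` are again homogeneous and monogenic, so
induction on `k` writes `P(x)` as `1/k!` times a sum of symmetrized products of the `zₛ` applied to
the constants `∂_κ P(0)`, which sit innermost. To move them to the outside one needs bracketing
independence: by polarization, `∑_κ t^κ ⋅ (symmetrized product for κ)` is the `n`-th power of left
multiplication by `y = ∑ tₛ zₛ`, which in a left alternative algebra is left multiplication by
`yⁿ`; comparing coefficients of this polynomial identity in `t` gives the claim.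
-/

open Finset hiding sum_apply
open Finset.Nat (antidiagonalTuple mem_antidiagonalTuple)

namespace Fueter

section Alternative

variable {A : Type*} [NormedAddCommGroup A] [NormedSpace ℝ A] (μ : A →L[ℝ] A →L[ℝ] A)

noncomputable def associator (a b c : A) : A := μ (μ a b) c - μ a (μ b c)

theorem associator_swap_left (hL : ∀ a b : A, μ (μ a a) b = μ a (μ a b)) (a b c : A) :
    associator μ a b c = -associator μ b a c := by
  have h := hL (a + b) c
  simp only [map_add, add_apply] at h
  simp only [associator]
  linear_combination (norm := module) h - hL a c - hL b c

theorem associator_teichmuller (a b c d : A) :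
    associator μ (μ a b) c d - associator μ a (μ b c) d + associator μ a b (μ c d) =
      μ a (associator μ b c d) + μ (associator μ a b c) d := by
  simp only [associator, map_sub, sub_apply]
  abel

variable {μ} {e : A} (he : ∀ a : A, μ e a = a ∧ μ a e = a)
  (hL : ∀ a b : A, μ (μ a a) b = μ a (μ a b))
include he hL

theorem associator_pow_eq_zero_and_commute (y : A) (n : ℕ) :
    (∀ b, associator μ y ((μ y ^ n) e) b = 0) ∧ μ ((μ y ^ n) e) y = μ y ((μ y ^ n) e) := by
  induction n with
  | zero => simp [associator, (he _).1, (he _).2]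
  | succ n ih =>
    obtain ⟨hassoc, hcomm⟩ := ih
    set p := (μ y ^ n) e
    have hpow : (μ y ^ (n + 1)) e = μ y p := by rw [pow_succ', mul_apply_eq_comp]
    rw [hpow]
    have hcomm' : μ (μ y p) y = μ y (μ y p) := by
      have := hassoc y
      rw [associator, sub_eq_zero] at this
      rw [this, hcomm]
    refine ⟨fun b => ?_, hcomm'⟩
    -- Teichmüller's identity at `(y, p, y, b)` leaves `[y p, y, b] = [y, y p, b]`, while left
    -- alternativity makes the two sides opposite.
    have ht := associator_teichmuller μ y p y b
    rw [associator_swap_left μ hL p y b, hassoc, hassoc, hassoc, hcomm] at ht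
    simp only [neg_zero, map_zero, zero_apply, add_zero] at ht
    have h2 : (2 : ℝ) • associator μ y (μ y p) b = 0 := by
      linear_combination (norm := module) associator_swap_left μ hL (μ y p) y b - ht
    exact (smul_eq_zero.mp h2).resolve_left two_ne_zero

theorem mul_pow_apply_unit (y : A) (n : ℕ) : μ ((μ y ^ n) e) = μ y ^ n := by
  induction n with
  | zero => ext b; simp [(he _).1]
  | succ n ih =>
    ext b
    have h := (associator_pow_eq_zero_and_commute he hL y n).1 b
    rw [associator, sub_eq_zero] at h
    rw [pow_succ', mul_apply_eq_comp, h, ih, mul_apply_eq_comp]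

end Alternative

section MultiIndex

variable {m : ℕ}

theorem sub_single_add_single {κ : Fin m → ℕ} {j : Fin m} (h : κ j ≠ 0) :
    κ - Pi.single j 1 + Pi.single j 1 = κ := by
  funext i
  rcases eq_or_ne i j with rfl | hij
  · simp only [Pi.add_apply, Pi.sub_apply, Pi.single_eq_same]; omega
  · simp [hij]

theorem sum_add_single (κ : Fin m → ℕ) (j : Fin m) :
    ∑ i, (κ + Pi.single j 1 : Fin m → ℕ) i = ∑ i, κ i + 1 := by
  simp [sum_add_distrib]

theorem prod_pow_add_single {R : Type*} [CommMonoid R] (t : Fin m → R) (κ : Fin m → ℕ)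
    (j : Fin m) : ∏ i, t i ^ (κ + Pi.single j 1 : Fin m → ℕ) i = t j * ∏ i, t i ^ κ i := by
  simp only [Pi.add_apply, pow_add, prod_mul_distrib]
  rw [mul_comm]
  congr 1
  simp [Pi.single_apply]

theorem sum_sum_antidiagonalTuple_add_single {M : Type*} [AddCommMonoid M] (n : ℕ)
    (g : Fin m → (Fin m → ℕ) → M) :
    ∑ j, ∑ κ ∈ antidiagonalTuple m n, g j (κ + Pi.single j 1) =
      ∑ κ ∈ antidiagonalTuple m (n + 1), ∑ j ∈ univ.filter (κ · ≠ 0), g j κ := by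
  rw [sum_comm' (t' := univ) (s' := fun j => (antidiagonalTuple m (n + 1)).filter (· j ≠ 0))
    (by simp [and_comm])]
  refine sum_congr rfl fun j _ => ?_
  refine sum_nbij' (· + Pi.single j 1) (· - Pi.single j 1) ?_ ?_ ?_ ?_ (fun _ _ => rfl)
  · intro κ hκ
    simp only [mem_antidiagonalTuple, mem_filter] at hκ ⊢
    exact ⟨by rw [sum_add_single, hκ], by simp⟩
  · intro κ hκ
    simp only [mem_filter, mem_antidiagonalTuple] at hκ ⊢
    have := sum_add_single (κ - Pi.single j 1) j
    rw [sub_single_add_single hκ.2] at this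
    omega
  · intro κ _
    exact add_tsub_cancel_right κ _
  · intro κ hκ
    exact sub_single_add_single (mem_filter.mp hκ).2

def indexList (κ : Fin m → ℕ) : List (Fin m) :=
  (List.finRange m).flatMap fun j => List.replicate (κ j) j

theorem count_indexList (κ : Fin m → ℕ) (i : Fin m) : (indexList κ).count i = κ i := by
  simp [indexList, List.count_flatMap, List.count_replicate, ← Fin.sum_univ_def]

theorem cons_perm_indexList_iff {κ : Fin m → ℕ} {j : Fin m} {l : List (Fin m)} :
    (j :: l).Perm (indexList κ) ↔ κ j ≠ 0 ∧ l.Perm (indexList (κ - Pi.single j 1)) := by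
  simp only [List.perm_iff_count, count_indexList, List.count_cons, beq_iff_eq]
  constructor
  · intro h
    refine ⟨by have := h j; simp at this; omega, fun i => ?_⟩
    rcases eq_or_ne j i with rfl | hij
    · simp [← h j]
    · simp [← h i, hij, Ne.symm hij]
  · rintro ⟨hj, h⟩ i
    rcases eq_or_ne j i with rfl | hij
    · simp [h j]; omega
    · simp [h i, hij, Ne.symm hij]

def perms (κ : Fin m → ℕ) : Finset (List (Fin m)) := (indexList κ).permutations.toFinset

theorem mem_perms {κ : Fin m → ℕ} {l : List (Fin m)} : l ∈ perms κ ↔ l.Perm (indexList κ) := by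
  simp [perms]

theorem perms_zero : perms (0 : Fin m → ℕ) = {[]} := by
  have : indexList (0 : Fin m → ℕ) = [] := by simp [indexList, List.flatMap_eq_nil_iff]
  simp [perms, this]

theorem sum_perms_eq_sum_cons {M : Type*} [AddCommMonoid M] {κ : Fin m → ℕ} (hκ : κ ≠ 0)
    (F : List (Fin m) → M) :
    ∑ l ∈ perms κ, F l =
      ∑ j ∈ univ.filter (κ · ≠ 0), ∑ l ∈ perms (κ - Pi.single j 1), F (j :: l) := by
  rw [sum_sigma']
  symm
  refine sum_bij (fun p _ => p.1 :: p.2) ?_ ?_ ?_ (fun _ _ => rfl)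
  · rintro ⟨j, l⟩ h
    simp only [mem_sigma, mem_filter, mem_univ, true_and, mem_perms] at h
    exact mem_perms.mpr (cons_perm_indexList_iff.mpr h)
  · rintro ⟨j, l⟩ _ ⟨j', l'⟩ _ h
    obtain ⟨rfl, rfl⟩ := List.cons_eq_cons.mp h
    rfl
  · intro l hl
    rw [mem_perms] at hl
    obtain _ | ⟨j, l⟩ := l
    · refine absurd (funext fun i => ?_) hκ
      rw [← count_indexList κ i, ← hl.count_eq]
      rfl
    · obtain ⟨hj, hl⟩ := cons_perm_indexList_iff.mp hl
      exact ⟨⟨j, l⟩, by simp [hj, mem_perms, hl], rfl⟩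

theorem filter_sum_eq_antidiagonalTuple (k : ℕ) :
    {κ ∈ Fintype.piFinset fun _ : Fin m => range (k + 1) | ∑ s, κ s = k} =
      antidiagonalTuple m k := by
  ext κ
  simp only [mem_filter, Fintype.mem_piFinset, mem_range, mem_antidiagonalTuple,
    and_iff_right_iff_imp]
  rintro rfl s
  exact Nat.lt_succ_of_le (single_le_sum (fun i _ => Nat.zero_le (κ i)) (mem_univ s))

end MultiIndex

theorem eq_zero_of_sum_prod_pow_smul_eq_zero {σ K V : Type*} [Fintype σ] [Field K] [Infinite K]
    [AddCommGroup V] [Module K V] {S : Finset (σ → ℕ)} {c : (σ → ℕ) → V}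
    (h : ∀ t : σ → K, ∑ κ ∈ S, (∏ i, t i ^ κ i) • c κ = 0) {κ : σ → ℕ} (hκ : κ ∈ S) :
    c κ = 0 := by
  classical
  rw [← Module.forall_dual_apply_eq_zero_iff K]
  intro φ
  let p : MvPolynomial σ K :=
    ∑ κ ∈ S, MvPolynomial.monomial (Finsupp.equivFunOnFinite.symm κ) (φ (c κ))
  have hp : p = 0 := MvPolynomial.funext fun t => by
    simpa [p, MvPolynomial.eval_monomial, Finsupp.prod_fintype, mul_comm] using congrArg φ (h t)
  have := congrArg (MvPolynomial.coeff (Finsupp.equivFunOnFinite.symm κ)) hp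
  rwa [MvPolynomial.coeff_sum, sum_eq_single_of_mem κ hκ, MvPolynomial.coeff_monomial,
    if_pos rfl, MvPolynomial.coeff_zero] at this
  intro κ' _ hne
  rw [MvPolynomial.coeff_monomial, if_neg (Finsupp.equivFunOnFinite.symm.injective.ne hne)]

section SymmetrizedProduct

variable {m : ℕ} {A : Type*} [NormedAddCommGroup A] [NormedSpace ℝ A]
  (μ : A →L[ℝ] A →L[ℝ] A) (w : Fin m → A)

-- Applied to `e` and divided by `|κ|!`, this is the Fueter polynomial `P_κ` (with `w j = z_{j+1}`);
-- using left multiplications as factors fixes the bracketing `z_{i₁} (z_{i₂} (⋯ b))`.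
noncomputable def symmProd (κ : Fin m → ℕ) : A →L[ℝ] A :=
  ∑ l ∈ perms κ, (l.map fun i => μ (w i)).prod

theorem symmProd_zero : symmProd μ w 0 = 1 := by
  simp [symmProd, perms_zero]

theorem symmProd_of_ne_zero {κ : Fin m → ℕ} (hκ : κ ≠ 0) :
    symmProd μ w κ = ∑ j ∈ univ.filter (κ · ≠ 0), μ (w j) * symmProd μ w (κ - Pi.single j 1) := by
  simp only [symmProd, sum_perms_eq_sum_cons hκ, List.map_cons, List.prod_cons, mul_sum]

theorem sum_symmProd_apply_succ (n : ℕ) (c : (Fin m → ℕ) → A) :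
    ∑ κ ∈ antidiagonalTuple m (n + 1), symmProd μ w κ (c κ) =
      ∑ j, μ (w j) (∑ κ ∈ antidiagonalTuple m n, symmProd μ w κ (c (κ + Pi.single j 1))) := by
  calc ∑ κ ∈ antidiagonalTuple m (n + 1), symmProd μ w κ (c κ)
      = ∑ κ ∈ antidiagonalTuple m (n + 1), ∑ j ∈ univ.filter (κ · ≠ 0),
          μ (w j) (symmProd μ w (κ - Pi.single j 1) (c κ)) := by
        refine sum_congr rfl fun κ hκ => ?_
        have hκ0 : κ ≠ 0 := by
          rintro rfl
          simp [mem_antidiagonalTuple] at hκ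
        simp only [symmProd_of_ne_zero μ w hκ0, sum_apply, mul_apply_eq_comp]
    _ = ∑ j, ∑ κ ∈ antidiagonalTuple m n,
          μ (w j) (symmProd μ w (κ + Pi.single j 1 - Pi.single j 1) (c (κ + Pi.single j 1))) :=
        (sum_sum_antidiagonalTuple_add_single n _).symm
    _ = _ := by simp only [add_tsub_cancel_right, map_sum]

theorem sum_prod_pow_smul_symmProd (t : Fin m → ℝ) (n : ℕ) :
    ∑ κ ∈ antidiagonalTuple m n, (∏ i, t i ^ κ i) • symmProd μ w κ = μ (∑ j, t j • w j) ^ n := by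
  ext b
  induction n generalizing b with
  | zero => simp [Finset.Nat.antidiagonalTuple_zero_right, symmProd_zero]
  | succ n ih =>
    simp only [sum_apply, smul_apply, ← map_smul] at ih ⊢
    rw [sum_symmProd_apply_succ, pow_succ', mul_apply_eq_comp, ← ih, map_sum μ, sum_apply]
    refine sum_congr rfl fun j _ => ?_
    simp only [prod_pow_add_single, mul_smul, map_smul, ← smul_sum, smul_apply]

theorem list_prod_map_apply (l : List (Fin m)) (b : A) :
    (l.map fun i => μ (w i)).prod b = (l.map w).foldr (fun a b => μ a b) b := by
  induction l with
  | nil => rfl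
  | cons i l ih => rw [List.map_cons, List.prod_cons, mul_apply_eq_comp, ih]; rfl

theorem symmProd_apply_eq_sum_foldr (w' : Fin (m + 1) → A) (κ : Fin m → ℕ) (b : A) :
    symmProd μ (fun j => w' j.succ) κ b =
      ∑ l ∈ ((List.finRange m).flatMap fun j => List.replicate (κ j) j.succ).permutations.toFinset,
        (l.map w').foldr (fun a b => μ a b) b := by
  have hlist : ((List.finRange m).flatMap fun j => List.replicate (κ j) j.succ) =
      (indexList κ).map Fin.succ := by
    simp [indexList, List.map_flatMap, List.map_replicate]
  have himage : ((indexList κ).permutations.map (List.map Fin.succ)).toFinset =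
      (perms κ).image (List.map Fin.succ) := by
    ext; simp [perms]
  rw [hlist, ← List.map_permutations, himage,
    sum_image fun _ _ _ _ h => (List.map_injective_iff.mpr (Fin.succ_injective _)) h,
    symmProd, sum_apply]
  simp only [List.map_map, list_prod_map_apply]
  rfl

variable {μ} {e : A} (he : ∀ a : A, μ e a = a ∧ μ a e = a)
  (hL : ∀ a b : A, μ (μ a a) b = μ a (μ a b))
include he hL

theorem symmProd_eq_mul_apply_unit (κ : Fin m → ℕ) : symmProd μ w κ = μ (symmProd μ w κ e) := by
  refine sub_eq_zero.mp <| eq_zero_of_sum_prod_pow_smul_eq_zero (K := ℝ)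
    (c := fun κ => symmProd μ w κ - μ (symmProd μ w κ e)) (fun t => ?_)
    (mem_antidiagonalTuple.mpr (rfl : ∑ i, κ i = _))
  have hunit := congrArg (· e) (sum_prod_pow_smul_symmProd μ w t (∑ i, κ i))
  simp only [sum_apply, smul_apply] at hunit
  calc ∑ κ' ∈ antidiagonalTuple m (∑ i, κ i),
        (∏ i, t i ^ κ' i) • (symmProd μ w κ' - μ (symmProd μ w κ' e))
      = μ (∑ j, t j • w j) ^ (∑ i, κ i) -
          μ (∑ κ' ∈ antidiagonalTuple m (∑ i, κ i), (∏ i, t i ^ κ' i) • symmProd μ w κ' e) := by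
        simp only [smul_sub, sum_sub_distrib, sum_prod_pow_smul_symmProd, map_sum, map_smul]
    _ = 0 := by rw [hunit, mul_pow_apply_unit he hL, sub_self]

end SymmetrizedProduct

section Derivatives

variable {E F : Type*} [NormedAddCommGroup E] [NormedSpace ℝ E] [NormedAddCommGroup F]
  [NormedSpace ℝ F] {f : E → F}

noncomputable def dirDeriv (u : E) (f : E → F) : E → F := fun x => fderiv ℝ f x u

theorem contDiff_dirDeriv {n n' : WithTop ℕ∞} (hf : ContDiff ℝ n f) (hn : n' + 1 ≤ n) (u : E) :
    ContDiff ℝ n' (dirDeriv u f) :=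
  (hf.fderiv_right hn).clm_apply contDiff_const

theorem hasFDerivAt_dirDeriv (hf : ContDiff ℝ 2 f) (u x : E) :
    HasFDerivAt (dirDeriv u f) ((fderiv ℝ (fderiv ℝ f) x).flip u) x := by
  have hd : DifferentiableAt ℝ (fderiv ℝ f) x :=
    (hf.fderiv_right (by norm_num)).differentiable one_ne_zero x
  unfold dirDeriv
  simpa using hd.hasFDerivAt.clm_apply (hasFDerivAt_const u x)

theorem dirDeriv_comm (hf : ContDiff ℝ 2 f) (u w : E) :
    dirDeriv u (dirDeriv w f) = dirDeriv w (dirDeriv u f) := by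
  funext x
  simp only [dirDeriv, (hasFDerivAt_dirDeriv hf _ x).fderiv, ContinuousLinearMap.flip_apply]
  exact hf.contDiffAt.isSymmSndFDerivAt (by simp) u w

theorem fderiv_apply_self_of_homogeneous {k : ℕ} (hf : Differentiable ℝ f)
    (hhom : ∀ (c : ℝ) x, f (c • x) = c ^ k • f x) (x : E) :
    fderiv ℝ f x x = (k : ℝ) • f x := by
  have hray : HasDerivAt (fun c : ℝ => f (c • x)) (fderiv ℝ f x x) 1 := by
    simpa [Function.comp_def] using
      (hf (1 • x)).hasFDerivAt.comp_hasDerivAt (1 : ℝ) ((hasDerivAt_id 1).smul_const x)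
  have hpow : HasDerivAt (fun c : ℝ => c ^ k • f x) ((k : ℝ) • f x) 1 := by
    simpa using (hasDerivAt_pow k (1 : ℝ)).smul_const (f x)
  exact hray.unique (by simpa only [hhom] using hpow)

theorem dirDeriv_smul_of_homogeneous {k : ℕ} (hf : ContDiff ℝ 1 f)
    (hhom : ∀ (c : ℝ) x, f (c • x) = c ^ (k + 1) • f x) (u : E) (c : ℝ) (x : E) :
    dirDeriv u f (c • x) = c ^ k • dirDeriv u f x := by
  have hd : Differentiable ℝ f := hf.differentiable one_ne_zero
  have hscale : ∀ c : ℝ, c • dirDeriv u f (c • x) = c ^ (k + 1) • dirDeriv u f x := by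
    intro c
    have h1 : HasFDerivAt (fun y => f (c • y)) ((fderiv ℝ f (c • x)).comp
        (c • ContinuousLinearMap.id ℝ E)) x :=
      (hd (c • x)).hasFDerivAt.comp x ((ContinuousLinearMap.id ℝ E).hasFDerivAt.const_smul c)
    have h2 : HasFDerivAt (fun y => f (c • y)) (c ^ (k + 1) • fderiv ℝ f x) x := by
      simpa only [hhom] using (hd x).hasFDerivAt.fun_const_smul (c ^ (k + 1))
    simpa [dirDeriv] using congrArg (· u) (h1.unique h2)
  have hcont : Continuous (dirDeriv u f) := (contDiff_dirDeriv (n' := 0) hf (by simp) u).continuous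
  -- the case `c = 0` follows by continuity from `c ≠ 0`
  refine congrFun (Continuous.ext_on (dense_compl_singleton 0)
    (f := fun c : ℝ => dirDeriv u f (c • x)) (g := fun c => c ^ k • dirDeriv u f x)
    (by fun_prop) (by fun_prop) fun c (hc : c ≠ 0) => ?_) c
  exact smul_right_injective F hc (by simpa [pow_succ', mul_smul] using hscale c)

theorem fderiv_apply_eq_sum {ι : Type*} [Fintype ι] [DecidableEq ι] {f : (ι → ℝ) → F}
    (x : ι → ℝ) : fderiv ℝ f x x = ∑ s, x s • dirDeriv (Pi.single s 1) f x := by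
  calc fderiv ℝ f x x = fderiv ℝ f x (∑ s, Pi.single s (x s)) := by rw [univ_sum_single]
    _ = _ := by simp only [map_sum, dirDeriv, ← map_smul, ← Pi.single_smul, smul_eq_mul, mul_one]

end Derivatives

section CauchyRiemann

variable {A : Type*} [NormedAddCommGroup A] [NormedSpace ℝ A] (μ : A →L[ℝ] A →L[ℝ] A)

noncomputable def cauchyRiemann {ι : Type*} [Fintype ι] [DecidableEq ι] (v : ι → A)
    (f : (ι → ℝ) → A) : (ι → ℝ) → A :=
  fun x => ∑ s, μ (v s) (dirDeriv (Pi.single s 1) f x)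

theorem cauchyRiemann_dirDeriv {ι : Type*} [Fintype ι] [DecidableEq ι] (v : ι → A)
    {f : (ι → ℝ) → A} (hf : ContDiff ℝ 2 f) (w : ι → ℝ) :
    cauchyRiemann μ v (dirDeriv w f) = dirDeriv w (cauchyRiemann μ v f) := by
  funext x
  have hterm : ∀ s, HasFDerivAt (fun y => μ (v s) (dirDeriv (Pi.single s 1) f y))
      ((μ (v s)).comp ((fderiv ℝ (fderiv ℝ f) x).flip (Pi.single s 1))) x :=
    fun s => (μ (v s)).hasFDerivAt.comp x (hasFDerivAt_dirDeriv hf _ x)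
  have hsum : HasFDerivAt (cauchyRiemann μ v f)
      (∑ s, (μ (v s)).comp ((fderiv ℝ (fderiv ℝ f) x).flip (Pi.single s 1))) x :=
    HasFDerivAt.fun_sum fun s _ => hterm s
  simp only [cauchyRiemann, dirDeriv_comm hf _ w]
  simp [dirDeriv, hsum.fderiv, (hasFDerivAt_dirDeriv hf _ x).fderiv]

variable {m : ℕ}

def fueterVar (e : A) (v : Fin (m + 1) → A) (x : Fin (m + 1) → ℝ) (ℓ : Fin (m + 1)) : A :=
  x ℓ • e - x 0 • v ℓ

theorem smul_eq_sum_fueterVar_mul {e : A} {v : Fin (m + 1) → A} (he : ∀ a, μ e a = a)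
    (hv0 : v 0 = e) {f : (Fin (m + 1) → ℝ) → A} {k : ℕ} (hf : Differentiable ℝ f)
    (hhom : ∀ (c : ℝ) x, f (c • x) = c ^ k • f x) (hmono : cauchyRiemann μ v f = 0)
    (x : Fin (m + 1) → ℝ) :
    (k : ℝ) • f x =
      ∑ j : Fin m, μ (fueterVar e v x j.succ) (dirDeriv (Pi.single j.succ 1) f x) := by
  have heuler := fderiv_apply_self_of_homogeneous hf hhom x
  rw [fderiv_apply_eq_sum, Fin.sum_univ_succ] at heuler
  have hmono0 := congrFun hmono x
  simp only [cauchyRiemann, Fin.sum_univ_succ, hv0, he, Pi.zero_apply] at hmono0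
  simp only [fueterVar, map_sub, map_smul, sub_apply, smul_apply, he, sum_sub_distrib, ← smul_sum]
  linear_combination (norm := module) -heuler + x 0 • hmono0

end CauchyRiemann

section IteratedDerivatives

variable {E F : Type*} [NormedAddCommGroup E] [NormedSpace ℝ E] [NormedAddCommGroup F]
  [NormedSpace ℝ F] {ι : Type*} (u : ι → E) {f : E → F}

noncomputable def iteratedDirDeriv (κ : ι → ℕ) (l : List ι) (f : E → F) : E → F :=
  l.foldr (fun j g => (dirDeriv (u j))^[κ j] g) f

theorem iteratedDirDeriv_cons (κ : ι → ℕ) (j : ι) (l : List ι) :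
    iteratedDirDeriv u κ (j :: l) f = (dirDeriv (u j))^[κ j] (iteratedDirDeriv u κ l f) :=
  rfl

theorem iteratedDirDeriv_zero (l : List ι) : iteratedDirDeriv u 0 l f = f := by
  induction l with
  | nil => rfl
  | cons j l ih => rw [iteratedDirDeriv_cons, Pi.zero_apply, Function.iterate_zero_apply, ih]

theorem contDiff_iterate_dirDeriv (hf : ContDiff ℝ ⊤ f) (w : E) (n : ℕ) :
    ContDiff ℝ ⊤ ((dirDeriv w)^[n] f) := by
  induction n with
  | zero => exact hf
  | succ n ih => rw [Function.iterate_succ_apply']; exact contDiff_dirDeriv ih le_top w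

theorem dirDeriv_iterate_comm (hf : ContDiff ℝ ⊤ f) (w w' : E) (n : ℕ) :
    dirDeriv w ((dirDeriv w')^[n] f) = (dirDeriv w')^[n] (dirDeriv w f) := by
  induction n with
  | zero => rfl
  | succ n ih =>
    rw [Function.iterate_succ_apply', Function.iterate_succ_apply', ← ih,
      dirDeriv_comm ((contDiff_iterate_dirDeriv hf w' n).of_le le_top)]

theorem contDiff_iteratedDirDeriv (hf : ContDiff ℝ ⊤ f) (κ : ι → ℕ) (l : List ι) :
    ContDiff ℝ ⊤ (iteratedDirDeriv u κ l f) := by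
  induction l with
  | nil => exact hf
  | cons j l ih => exact contDiff_iterate_dirDeriv ih (u j) (κ j)

theorem dirDeriv_iteratedDirDeriv (hf : ContDiff ℝ ⊤ f) (w : E) (κ : ι → ℕ) (l : List ι) :
    dirDeriv w (iteratedDirDeriv u κ l f) = iteratedDirDeriv u κ l (dirDeriv w f) := by
  induction l with
  | nil => rfl
  | cons j l ih =>
    rw [iteratedDirDeriv_cons, iteratedDirDeriv_cons, ← ih,
      dirDeriv_iterate_comm (contDiff_iteratedDirDeriv u hf κ l)]

theorem iteratedDirDeriv_congr {κ κ' : ι → ℕ} {l : List ι} (h : ∀ j ∈ l, κ j = κ' j) :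
    iteratedDirDeriv u κ l f = iteratedDirDeriv u κ' l f := by
  induction l with
  | nil => rfl
  | cons j l ih =>
    rw [iteratedDirDeriv_cons, iteratedDirDeriv_cons, h j List.mem_cons_self,
      ih fun i hi => h i (List.mem_cons_of_mem j hi)]

theorem iteratedDirDeriv_add_single [DecidableEq ι] (hf : ContDiff ℝ ⊤ f) (κ : ι → ℕ)
    {l : List ι} (hl : l.Nodup) {j : ι} (hj : j ∈ l) :
    iteratedDirDeriv u (κ + Pi.single j 1) l f = iteratedDirDeriv u κ l (dirDeriv (u j) f) := by
  rw [← dirDeriv_iteratedDirDeriv u hf]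
  induction l with
  | nil => simp at hj
  | cons i l ih =>
    obtain ⟨hil, hl⟩ := List.nodup_cons.mp hl
    rw [iteratedDirDeriv_cons, iteratedDirDeriv_cons, Pi.add_apply]
    rcases eq_or_ne i j with rfl | hij
    · have hoff : ∀ i' ∈ l, (κ + Pi.single i 1 : ι → ℕ) i' = κ i' := fun i' hi' => by
        simp [ne_of_mem_of_not_mem hi' hil]
      rw [iteratedDirDeriv_congr u hoff, Pi.single_eq_same, Function.iterate_succ_apply']
    · rw [Pi.single_eq_of_ne hij, add_zero, ih hl ((List.mem_cons.mp hj).resolve_left hij.symm),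
        dirDeriv_iterate_comm (contDiff_iteratedDirDeriv u hf κ l)]

end IteratedDerivatives

section FueterExpansion

variable {m : ℕ} {A : Type*} [NormedAddCommGroup A] [NormedSpace ℝ A] (μ : A →L[ℝ] A →L[ℝ] A)

noncomputable def taylorCoeff (f : (Fin (m + 1) → ℝ) → A) (κ : Fin m → ℕ) : A :=
  iteratedDirDeriv (fun j : Fin m => (Pi.single j.succ 1 : Fin (m + 1) → ℝ)) κ
    (List.finRange m) f 0

theorem taylorCoeff_dirDeriv {f : (Fin (m + 1) → ℝ) → A} (hf : ContDiff ℝ ⊤ f) (j : Fin m)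
    (κ : Fin m → ℕ) :
    taylorCoeff (dirDeriv (Pi.single j.succ 1) f) κ = taylorCoeff f (κ + Pi.single j 1) := by
  rw [taylorCoeff, taylorCoeff,
    iteratedDirDeriv_add_single _ hf κ (List.nodup_finRange m) (List.mem_finRange j)]

variable {μ} {e : A} {v : Fin (m + 1) → A} (he : ∀ a : A, μ e a = a) (hv0 : v 0 = e)
include he hv0

theorem eq_sum_symmProd_taylorCoeff (k : ℕ) {f : (Fin (m + 1) → ℝ) → A} (hf : ContDiff ℝ ⊤ f)
    (hhom : ∀ (c : ℝ) x, f (c • x) = c ^ k • f x) (hmono : cauchyRiemann μ v f = 0)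
    (x : Fin (m + 1) → ℝ) :
    f x = ∑ κ ∈ antidiagonalTuple m k,
      (k.factorial : ℝ)⁻¹ • symmProd μ (fun j => fueterVar e v x j.succ) κ (taylorCoeff f κ) := by
  set w := fun j : Fin m => fueterVar e v x j.succ
  induction k generalizing f with
  | zero =>
    have hconst : f 0 = f x := by simpa using hhom 0 x
    simp [Finset.Nat.antidiagonalTuple_zero_right, symmProd_zero, taylorCoeff,
      iteratedDirDeriv_zero, hconst]
  | succ k ih =>
    have hpartial : ∀ j : Fin m, dirDeriv (Pi.single j.succ 1) f x =
        ∑ κ ∈ antidiagonalTuple m k,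
          symmProd μ w κ ((k.factorial : ℝ)⁻¹ • taylorCoeff f (κ + Pi.single j 1)) := by
      intro j
      have hmono' : cauchyRiemann μ v (dirDeriv (Pi.single j.succ 1) f) = 0 := by
        rw [cauchyRiemann_dirDeriv μ v (hf.of_le le_top), hmono]
        funext y
        simp [dirDeriv]
      simp only [ih (contDiff_dirDeriv hf le_top _)
        (dirDeriv_smul_of_homogeneous (hf.of_le le_top) hhom _) hmono', map_smul,
        taylorCoeff_dirDeriv hf]
    have hsucc : ((k + 1 : ℕ) : ℝ) • f x = ∑ κ ∈ antidiagonalTuple m (k + 1),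
        symmProd μ w κ ((k.factorial : ℝ)⁻¹ • taylorCoeff f κ) := by
      rw [smul_eq_sum_fueterVar_mul μ he hv0 (hf.differentiable (by simp)) hhom
        hmono x, sum_symmProd_apply_succ]
      simp only [hpartial, w]
    rw [← inv_smul_smul₀ (Nat.cast_ne_zero.mpr k.succ_ne_zero : ((k + 1 : ℕ) : ℝ) ≠ 0) (f x),
      hsucc, smul_sum]
    refine sum_congr rfl fun κ _ => ?_
    rw [map_smul, smul_smul, Nat.factorial_succ, Nat.cast_mul, mul_inv]

end FueterExpansion

end Fueter

theorem homogeneous_monogenic_fueter_representation_general {A : Type*} [NormedAddCommGroup A]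
    [NormedSpace ℝ A]
    (μ : A →L[ℝ] A →L[ℝ] A) (e : A)
    (he : ∀ a : A, μ e a = a ∧ μ a e = a)
    (hLA : ∀ a b : A, μ (μ a a) b = μ a (μ a b))
    (m : ℕ) (v : Fin (m + 1) → A)
    (hv0 : v 0 = e)
    (k : ℕ) (P : ((Fin (m + 1)) → ℝ) → A)
    (hPsmooth : ContDiff ℝ ⊤ P)
    (hPhom : ∀ (c : ℝ) (x : (Fin (m + 1)) → ℝ), P (c • x) = c ^ k • P x)
    (hPmono : ∀ x, ∑ s, μ (v s) (fderiv ℝ P x (Pi.single s 1)) = 0)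
    (z : Fin (m + 1) → ((Fin (m + 1)) → ℝ) → A)
    (hz : z = fun ℓ p => p ℓ • e - p 0 • v ℓ)
    (Pf : (Fin m → ℕ) → ((Fin (m + 1)) → ℝ) → A)
    (hPf : Pf = fun κ p => (((∑ s, κ s).factorial : ℝ))⁻¹ •
      ∑ l' ∈ ((List.finRange m).flatMap fun j =>
          List.replicate (κ j) j.succ).permutations.toFinset,
        (l'.map (fun i => z i p)).foldr (fun a b => μ a b) e)
    (a : (Fin m → ℕ) → A)
    (ha : a = fun κ => ((List.finRange m).foldr
      (fun j g => (fun f p => fderiv ℝ f p (Pi.single j.succ 1))^[κ j] g) P) 0) :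
    ∀ x, P x = ∑ κ ∈ Finset.filter (fun κ => ∑ s, κ s = k)
        (Fintype.piFinset fun _ : Fin m => Finset.range (k + 1)),
      μ (Pf κ x) (a κ) := by
  subst hz hPf ha
  intro x
  rw [Fueter.eq_sum_symmProd_taylorCoeff (fun a => (he a).1) hv0 k hPsmooth hPhom (funext hPmono) x,
    Fueter.filter_sum_eq_antidiagonalTuple]
  refine Finset.sum_congr rfl fun κ hκ => ?_
  dsimp only
  rw [Finset.Nat.mem_antidiagonalTuple.mp hκ, Fueter.symmProd_eq_mul_apply_unit _ he hLA,
    Fueter.symmProd_apply_eq_sum_foldr μ (Fueter.fueterVar e v x), map_smul, smul_apply]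
  rfl

/-- Let `P : M → A` be a homogeneous polynomial of degree `k` on the hypercomplex subspace
`M ≅ ℝ^{m+1}` of the real alternative `∗`-algebra `A` which is left monogenic.  Then `P`
admits the Fueter representation `P(x) = ∑_{|κ|=k} P_κ(x) a_κ` with coefficients
`a_κ = ∂_κ P(0)`, where `P_κ` are the Fueter polynomials (encoded via the canonical list
with `κ j` copies of the index `j`). -/
theorem homogeneous_monogenic_fueter_representation {A : Type*} [NormedAddCommGroup A]
    [NormedSpace ℝ A] [FiniteDimensional ℝ A]
    (μ : A →L[ℝ] A →L[ℝ] A) (e : A)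
    (he : ∀ a : A, μ e a = a ∧ μ a e = a)
    (hLA : ∀ a b : A, μ (μ a a) b = μ a (μ a b))
    (hRA : ∀ a b : A, μ (μ a b) b = μ a (μ b b))
    (m : ℕ) (hm : 1 ≤ m) (v : Fin (m + 1) → A)
    (hv0 : v 0 = e)
    (hvsq : ∀ s, s ≠ 0 → μ (v s) (v s) = -e)
    (hvanti : ∀ s t, s ≠ 0 → t ≠ 0 → s ≠ t → μ (v s) (v t) = -μ (v t) (v s))
    (k : ℕ) (P : ((Fin (m + 1)) → ℝ) → A)
    (hPsmooth : ContDiff ℝ ⊤ P)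
    (hPdeg : ∀ p, iteratedFDeriv ℝ (k + 1) P p = 0)
    (hPhom : ∀ (c : ℝ) (x : (Fin (m + 1)) → ℝ), P (c • x) = c ^ k • P x)
    (hPmono : ∀ x, ∑ s, μ (v s) (fderiv ℝ P x (Pi.single s 1)) = 0)
    (z : Fin (m + 1) → ((Fin (m + 1)) → ℝ) → A)
    (hz : z = fun ℓ p => p ℓ • e - p 0 • v ℓ)
    (Pf : (Fin m → ℕ) → ((Fin (m + 1)) → ℝ) → A)
    (hPf : Pf = fun κ p => (((∑ s, κ s).factorial : ℝ))⁻¹ •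
      ∑ l' ∈ ((List.finRange m).flatMap fun j =>
          List.replicate (κ j) j.succ).permutations.toFinset,
        (l'.map (fun i => z i p)).foldr (fun a b => μ a b) e)
    (a : (Fin m → ℕ) → A)
    (ha : a = fun κ => ((List.finRange m).foldr
      (fun j g => (fun f p => fderiv ℝ f p (Pi.single j.succ 1))^[κ j] g) P) 0) :
    ∀ x, P x = ∑ κ ∈ Finset.filter (fun κ => ∑ s, κ s = k)
        (Fintype.piFinset fun _ : Fin m => Finset.range (k + 1)),
      μ (Pf κ x) (a κ) :=
  homogeneous_monogenic_fueter_representation_general μ e he hLA m v hv0 k P hPsmooth hPhom hPmono z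
    hz Pf hPf a ha
end
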